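/- arXiv:2011.05761 — 6 statements merged into one kernel-verified Lean document; each statement's English description precedes it below -/
import Mathlib

section
/- Let n < m and 0 < p̃₁ ≤ ⋯ ≤ p̃_m. Suppose the set J = { i : p̃_i < n / (∑_{k=1}^m 1/p̃_k) } is nonempty. Then the set H = { j ∈ {1,…,m} : p̃_j ∑_{k=j+1}^m 1/p̃_k < n − j } is nonempty, its maximum d satisfies card(J) ≤ d ≤ n − 1, and p̃_d < (n − d)/(∑_{k=d+1}^m 1/p̃_k) ≤ p̃_{d+1}. -/
/-!
Let `S = ∑ 1/q̃ₖ` and `i₀ = max J`. Since `q̃ₖ ≤ q̃ᵢ₀` for `k ≤ i₀`, the head sum satisfies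
`q̃ᵢ₀ ∑_{k ≤ i₀} 1/q̃ₖ ≥ i₀`, so `q̃ᵢ₀ S < n` leaves `q̃ᵢ₀ ∑_{k > i₀} 1/q̃ₖ < n - i₀`: thus `i₀ ∈ H`,
and `card J ≤ i₀ ≤ d`. Any `j ∈ H` has `0 ≤ n - j`, whence `d < n < m`. Finally `d + 1 ∉ H`, and
peeling the term `1/q̃_{d+1}` off the tail sum turns this into `n - d ≤ q̃_{d+1} ∑_{k > d} 1/q̃ₖ`.
-/

open Finset

theorem Finset.sum_Icc_add_sum_Icc_succ {M : Type*} [AddCommMonoid M] (f : ℕ → M)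
    {a j m : ℕ} (haj : a ≤ j + 1) (hjm : j ≤ m) :
    ∑ k ∈ Icc a j, f k + ∑ k ∈ Icc (j + 1) m, f k = ∑ k ∈ Icc a m, f k := by
  simp only [← Finset.Ico_add_one_right_eq_Icc]
  exact sum_Ico_consecutive f haj (by omega)

theorem Finset.card_le_max'_of_subset_Icc_one {s : Finset ℕ} {m : ℕ} (hs : s ⊆ Icc 1 m)
    (hne : s.Nonempty) : #s ≤ s.max' hne := by
  have hsub : s ⊆ Icc 1 (s.max' hne) := fun k hk =>
    mem_Icc.mpr ⟨(mem_Icc.mp (hs hk)).1, s.le_max' k hk⟩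
  simpa using card_le_card hsub

theorem card_le_mul_sum_one_div {ι : Type*} {s : Finset ι} {q : ι → ℝ} {c : ℝ}
    (hq : ∀ k ∈ s, 0 < q k ∧ q k ≤ c) : (#s : ℝ) ≤ c * ∑ k ∈ s, 1 / q k := by
  rw [mul_sum, card_eq_sum_ones, Nat.cast_sum, Nat.cast_one]
  refine sum_le_sum fun k hk => ?_
  rw [mul_one_div, one_le_div₀ (hq k hk).1]
  exact (hq k hk).2

section TailSums

variable {q : ℕ → ℝ} {m : ℕ} {n : ℝ}

theorem mul_tail_sum_lt_of_mul_sum_lt {i : ℕ} (him : i ≤ m)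
    (hq : ∀ k ∈ Icc 1 i, 0 < q k ∧ q k ≤ q i) (hlt : q i * ∑ k ∈ Icc 1 m, 1 / q k < n) :
    q i * ∑ k ∈ Icc (i + 1) m, 1 / q k < n - i := by
  have hhead : (i : ℝ) ≤ q i * ∑ k ∈ Icc 1 i, 1 / q k := by
    simpa using card_le_mul_sum_one_div hq
  rw [← sum_Icc_add_sum_Icc_succ _ (by omega) him, mul_add] at hlt
  linarith

theorem lt_of_mul_tail_sum_lt {j : ℕ} (hq : ∀ k ∈ Icc j m, 0 < q k)
    (hlt : q j * ∑ k ∈ Icc (j + 1) m, 1 / q k < n - j) : (j : ℝ) < n := by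
  have hnonneg : 0 ≤ q j * ∑ k ∈ Icc (j + 1) m, 1 / q k := by
    by_cases hjm : j ≤ m
    · refine mul_nonneg (hq j (mem_Icc.mpr ⟨le_rfl, hjm⟩)).le (sum_nonneg fun k hk => ?_)
      exact (one_div_pos.mpr (hq k (mem_Icc.mpr ⟨by grind, (mem_Icc.mp hk).2⟩))).le
    · simp [Icc_eq_empty (by omega : ¬ j + 1 ≤ m)]
  linarith

theorem sub_le_mul_tail_sum_of_le {j : ℕ} (hjm : j + 1 ≤ m) (hq : 0 < q (j + 1))
    (hle : n - (j + 1 : ℕ) ≤ q (j + 1) * ∑ k ∈ Icc (j + 1 + 1) m, 1 / q k) :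
    n - j ≤ q (j + 1) * ∑ k ∈ Icc (j + 1) m, 1 / q k := by
  rw [← sum_Icc_add_sum_Icc_succ _ le_self_add hjm, Icc_self, sum_singleton, mul_add,
    mul_one_div_cancel hq.ne']
  push_cast at hle
  linarith

end TailSums
theorem index_d_exists_general {m n : ℕ} (hnm : n < m) (q : ℕ → ℝ)
    (hq0 : ∀ i ∈ Finset.Icc 1 m, 0 < q i)
    (hmono : ∀ i ∈ Finset.Icc 1 m, ∀ j ∈ Finset.Icc 1 m, i ≤ j → q i ≤ q j)
    (hJ : ((Finset.Icc 1 m).filter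
        (fun i => q i < (n : ℝ) / ∑ k ∈ Finset.Icc 1 m, 1 / q k)).Nonempty) :
    ∃ d ∈ (Finset.Icc 1 m).filter
        (fun j => q j * ∑ k ∈ Finset.Icc (j + 1) m, 1 / q k < (n : ℝ) - j),
      (∀ j ∈ (Finset.Icc 1 m).filter
          (fun j => q j * ∑ k ∈ Finset.Icc (j + 1) m, 1 / q k < (n : ℝ) - j), j ≤ d) ∧
      ((Finset.Icc 1 m).filter
        (fun i => q i < (n : ℝ) / ∑ k ∈ Finset.Icc 1 m, 1 / q k)).card ≤ d ∧
      d ≤ n - 1 ∧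
      q d < ((n : ℝ) - d) / (∑ k ∈ Finset.Icc (d + 1) m, 1 / q k) ∧
      ((n : ℝ) - d) / (∑ k ∈ Finset.Icc (d + 1) m, 1 / q k) ≤ q (d + 1) := by
  set J := (Icc 1 m).filter (fun i => q i < (n : ℝ) / ∑ k ∈ Icc 1 m, 1 / q k)
  set H := (Icc 1 m).filter (fun j => q j * ∑ k ∈ Icc (j + 1) m, 1 / q k < (n : ℝ) - j)
  set i₀ := J.max' hJ
  obtain ⟨hi₀m, hi₀⟩ := mem_filter.mp (J.max'_mem hJ)
  have hS : 0 < ∑ k ∈ Icc 1 m, 1 / q k :=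
    sum_pos (fun k hk => one_div_pos.mpr (hq0 k hk)) (nonempty_Icc.mpr (by omega))
  have hhead : ∀ k ∈ Icc 1 i₀, 0 < q k ∧ q k ≤ q i₀ := fun k hk => by
    have hkm : k ∈ Icc 1 m := by grind
    exact ⟨hq0 k hkm, hmono k hkm i₀ hi₀m (mem_Icc.mp hk).2⟩
  have hi₀H : i₀ ∈ H := mem_filter.mpr ⟨hi₀m, mul_tail_sum_lt_of_mul_sum_lt
    (mem_Icc.mp hi₀m).2 hhead ((lt_div_iff₀ hS).mp hi₀)⟩
  set d := H.max' ⟨_, hi₀H⟩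
  obtain ⟨hdm, hdH⟩ := mem_filter.mp (H.max'_mem ⟨_, hi₀H⟩)
  have hdn : d < n := by
    exact_mod_cast lt_of_mul_tail_sum_lt (fun k hk => hq0 k (by grind)) hdH
  have hd1 : d + 1 ∈ Icc 1 m := mem_Icc.mpr ⟨by omega, by omega⟩
  have htail : 0 < ∑ k ∈ Icc (d + 1) m, 1 / q k :=
    sum_pos (fun k hk => one_div_pos.mpr (hq0 k (by grind))) ⟨d + 1, by grind⟩
  refine ⟨d, H.max'_mem _, fun j hj => H.le_max' j hj, ?_, by omega,
    (lt_div_iff₀ htail).mpr hdH, (div_le_iff₀ htail).mpr ?_⟩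
  · exact (card_le_max'_of_subset_Icc_one (filter_subset _ _) hJ).trans (H.le_max' _ hi₀H)
  · have hd1H : d + 1 ∉ H := fun h => by simpa [d] using H.le_max' _ h
    refine sub_le_mul_tail_sum_of_le (mem_Icc.mp hd1).2 (hq0 _ hd1) (not_lt.mp fun h => ?_)
    exact hd1H (mem_filter.mpr ⟨hd1, h⟩)

/-- Existence and properties of the index `d` when the condition (H) fails for a
nonempty set of indices. -/
theorem index_d_exists {m n : ℕ} (hn : 0 < n) (hnm : n < m) (q : ℕ → ℝ)
    (hq0 : ∀ i ∈ Finset.Icc 1 m, 0 < q i)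
    (hmono : ∀ i ∈ Finset.Icc 1 m, ∀ j ∈ Finset.Icc 1 m, i ≤ j → q i ≤ q j)
    (hJ : ((Finset.Icc 1 m).filter
        (fun i => q i < (n : ℝ) / ∑ k ∈ Finset.Icc 1 m, 1 / q k)).Nonempty) :
    ∃ d ∈ (Finset.Icc 1 m).filter
        (fun j => q j * ∑ k ∈ Finset.Icc (j + 1) m, 1 / q k < (n : ℝ) - j),
      (∀ j ∈ (Finset.Icc 1 m).filter
          (fun j => q j * ∑ k ∈ Finset.Icc (j + 1) m, 1 / q k < (n : ℝ) - j), j ≤ d) ∧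
      ((Finset.Icc 1 m).filter
        (fun i => q i < (n : ℝ) / ∑ k ∈ Finset.Icc 1 m, 1 / q k)).card ≤ d ∧
      d ≤ n - 1 ∧
      q d < ((n : ℝ) - d) / (∑ k ∈ Finset.Icc (d + 1) m, 1 / q k) ∧
      ((n : ℝ) - d) / (∑ k ∈ Finset.Icc (d + 1) m, 1 / q k) ≤ q (d + 1) :=
  index_d_exists_general hnm q hq0 hmono hJ
end

section
/- Let n < m, 0 < p̃₁ ≤ ⋯ ≤ p̃_m, and let d ∈ {1,…,n−1} satisfy p̃_d < (n−d)/(∑_{k=d+1}^m 1/p̃_k) ≤ p̃_{d+1}. Then the minimum of max_{1≤i≤m} p̃_i a_i over a₁,…,a_m ∈ [0,1] with ∑_{i=1}^m a_i = n equals (n − d)/(∑_{k=d+1}^m 1/p̃_k). -/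
/-!
Below the level `v = (n - d) / ∑_{k > d} 1/p̃_k` nothing can be achieved: if every `p̃_i a_i ≤ M`,
then `n - d ≤ ∑_{i > d} a_i ≤ M ∑_{i > d} 1/p̃_i`, because the first `d` coordinates contribute at
most `d`. The level is attained by filling the `d` cheapest coordinates completely and equalising
`p̃_i a_i = v` on the others; the conditions on `d` say exactly that this point lies in `[0,1]^m`
and that its maximum is `v`.
-/

open Finset

theorem Finset.sum_Icc_one_eq_add {M : Type*} [AddCommMonoid M] (f : ℕ → M) {d m : ℕ} (hdm : d ≤ m) :
    ∑ i ∈ Icc 1 m, f i = ∑ i ∈ Icc 1 d, f i + ∑ i ∈ Icc (d + 1) m, f i := by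
  have hIoc (k : ℕ) : Icc 1 k = Ioc 0 k := Icc_add_one_left_eq_Ioc 0 k
  rw [hIoc, hIoc, Icc_add_one_left_eq_Ioc, sum_Ioc_consecutive _ d.zero_le hdm]

theorem Finset.sum_le_mul_sum_one_div {ι 𝕜 : Type*} [Field 𝕜] [LinearOrder 𝕜]
    [IsStrictOrderedRing 𝕜] {s : Finset ι} {q a : ι → 𝕜} {M : 𝕜}
    (hq : ∀ i ∈ s, 0 < q i) (hM : ∀ i ∈ s, q i * a i ≤ M) :
    ∑ i ∈ s, a i ≤ M * ∑ i ∈ s, 1 / q i := by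
  rw [mul_sum]
  refine sum_le_sum fun i hi => ?_
  rw [mul_one_div, le_div_iff₀ (hq i hi), mul_comm]
  exact hM i hi

theorem sub_le_mul_sum_one_div_of_sum_eq {m n d : ℕ} (hdm : d ≤ m) {q a : ℕ → ℝ} {M : ℝ}
    (hq : ∀ i ∈ Icc (d + 1) m, 0 < q i) (ha : ∀ i ∈ Icc 1 m, a i ∈ Set.Icc (0 : ℝ) 1)
    (hsum : ∑ i ∈ Icc 1 m, a i = n) (hM : ∀ i ∈ Icc 1 m, q i * a i ≤ M) :
    (n : ℝ) - d ≤ M * ∑ k ∈ Icc (d + 1) m, 1 / q k := by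
  have hhead : ∑ i ∈ Icc 1 d, a i ≤ d := by
    simpa using sum_le_card_nsmul (Icc 1 d) a 1 fun i hi =>
      (ha i (Icc_subset_Icc_right hdm hi)).2
  have htail := sum_le_mul_sum_one_div hq fun i hi =>
    hM i (Icc_subset_Icc_left (by omega) hi)
  rw [sum_Icc_one_eq_add a hdm] at hsum
  linarith

noncomputable def waterFilling (d : ℕ) (v : ℝ) (q : ℕ → ℝ) (i : ℕ) : ℝ :=
  if i ≤ d then 1 else v / q i

section waterFilling

variable {d m : ℕ} {v : ℝ} {q : ℕ → ℝ}

theorem waterFilling_mem_Icc {i : ℕ} (hv : 0 ≤ v) (hqi : 0 < q i) (hvq : d < i → v ≤ q i) :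
    waterFilling d v q i ∈ Set.Icc (0 : ℝ) 1 := by
  unfold waterFilling
  split_ifs with hid
  · exact ⟨zero_le_one, le_rfl⟩
  · exact ⟨div_nonneg hv hqi.le, (div_le_one hqi).2 (hvq (by omega))⟩

theorem sum_waterFilling (hdm : d ≤ m) :
    ∑ i ∈ Icc 1 m, waterFilling d v q i = d + v * ∑ k ∈ Icc (d + 1) m, 1 / q k := by
  rw [sum_Icc_one_eq_add _ hdm, mul_sum]
  congr 1
  · have hhead : ∀ i ∈ Icc 1 d, waterFilling d v q i = 1 := fun i hi => if_pos (mem_Icc.1 hi).2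
    simp [sum_congr rfl hhead]
  · refine sum_congr rfl fun i hi => ?_
    rw [waterFilling, if_neg (by simp only [mem_Icc] at hi; omega), mul_one_div]

theorem sup'_mul_waterFilling (hdm : d + 1 ≤ m) (H : (Icc 1 m).Nonempty)
    (hhead : ∀ i ∈ Icc 1 m, i ≤ d → q i ≤ v) (htail : ∀ i ∈ Icc (d + 1) m, 0 < q i) :
    (Icc 1 m).sup' H (fun i => q i * waterFilling d v q i) = v := by
  have hterm : ∀ i ∈ Icc (d + 1) m, q i * waterFilling d v q i = v := fun i hi => by
    rw [waterFilling, if_neg (by simp only [mem_Icc] at hi; omega),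
      mul_div_cancel₀ _ (htail i hi).ne']
  refine le_antisymm (sup'_le _ _ fun i hi => ?_) ?_
  · by_cases hid : i ≤ d
    · simpa [waterFilling, hid] using hhead i hi hid
    · exact (hterm i (by simp only [mem_Icc] at hi ⊢; omega)).le
  · exact le_sup'_of_le _ (by simp only [mem_Icc]; omega) (hterm (d + 1) (by simpa using hdm)).ge

end waterFilling

/-- With the index `d` as specified, the minimum of `max_i p̃_i a_i` over `a ∈ [0,1]^m`
with `∑ a_i = n` equals `(n - d)/∑_{k=d+1}^m 1/p̃_k`. -/
theorem min_with_index_d {m n d : ℕ} (hnm : n < m)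
    (hdn : d ≤ n - 1) (q : ℕ → ℝ)
    (hq0 : ∀ i ∈ Finset.Icc 1 m, 0 < q i)
    (hmono : ∀ i ∈ Finset.Icc 1 m, ∀ j ∈ Finset.Icc 1 m, i ≤ j → q i ≤ q j)
    (hlt : q d < ((n : ℝ) - d) / (∑ k ∈ Finset.Icc (d + 1) m, 1 / q k))
    (hge : ((n : ℝ) - d) / (∑ k ∈ Finset.Icc (d + 1) m, 1 / q k) ≤ q (d + 1)) :
    IsLeast
      {v : ℝ | ∃ a : ℕ → ℝ, (∀ i ∈ Finset.Icc 1 m, a i ∈ Set.Icc (0 : ℝ) 1) ∧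
        (∑ i ∈ Finset.Icc 1 m, a i) = (n : ℝ) ∧
        v = (Finset.Icc 1 m).sup'
              (Finset.nonempty_Icc.mpr (by omega))
              (fun i => q i * a i)}
      (((n : ℝ) - d) / (∑ k ∈ Finset.Icc (d + 1) m, 1 / q k)) := by
  have hdm : d + 1 ≤ m := by omega
  have htail : ∀ i ∈ Icc (d + 1) m, 0 < q i := fun i hi =>
    hq0 i (Icc_subset_Icc_left (by omega) hi)
  have hS : 0 < ∑ k ∈ Icc (d + 1) m, 1 / q k :=
    sum_pos (fun i hi => one_div_pos.2 (htail i hi)) (nonempty_Icc.2 hdm)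
  have hnd : (d : ℝ) ≤ n := by exact_mod_cast (by omega : d ≤ n)
  set v := ((n : ℝ) - d) / ∑ k ∈ Icc (d + 1) m, 1 / q k
  have hv : 0 ≤ v := div_nonneg (by linarith) hS.le
  refine ⟨⟨waterFilling d v q, fun i hi => waterFilling_mem_Icc hv (hq0 i hi) fun hid =>
      hge.trans (hmono _ (by simp only [mem_Icc]; omega) i hi hid), ?_, ?_⟩, ?_⟩
  · rw [sum_waterFilling (by omega), div_mul_cancel₀ _ hS.ne']
    ring
  · refine (sup'_mul_waterFilling hdm _ (fun i hi hid => ?_) htail).symm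
    exact (hmono i hi d (by simp only [mem_Icc] at hi ⊢; omega) hid).trans hlt.le
  · rintro _ ⟨a, ha, hsum, rfl⟩
    rw [div_le_iff₀ hS]
    exact sub_le_mul_sum_one_div_of_sum_eq (by omega) htail ha hsum fun i hi =>
      le_sup' (fun i => q i * a i) hi
end

section
/- Let n < m, 0 < p̃₁ ≤ ⋯ ≤ p̃_m, and d with p̃_d < (n−d)/(∑_{k=d+1}^m 1/p̃_k) ≤ p̃_{d+1}, 1 ≤ d ≤ n−1. Suppose a₁,…,a_m ∈ [0,1] with ∑ a_i = n achieve max_i p̃_i a_i = (n−d)/(∑_{k=d+1}^m 1/p̃_k). Then a_i = 1 for all i ≤ d and a_i = (n−d)/(p̃_i ∑_{k=d+1}^m 1/p̃_k) for all i > d. -/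
/-!
Let `c = (n - d) / ∑_{k>d} 1/p̃_k`. The constraints `a_i ≤ 1` and `p̃_i a_i ≤ c` say that `a`
lies below the profile `b` with `b_i = 1` for `i ≤ d` and `b_i = c / p̃_i` for `i > d`, and
`∑ b_i = d + (n - d) = n = ∑ a_i`. A vector dominated by another with the same sum equals it.
-/

open Finset

theorem eq_one_and_eq_div_of_sum_eq {ι : Type*} [DecidableEq ι] {s t : Finset ι}
    (hst : Disjoint s t) {q a : ι → ℝ} {c : ℝ} (hq : ∀ i ∈ t, 0 < q i)
    (ha : ∀ i ∈ s, a i ≤ 1) (hqa : ∀ i ∈ t, q i * a i ≤ c)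
    (hsum : ∑ i ∈ s ∪ t, a i = #s + c * ∑ i ∈ t, 1 / q i) :
    (∀ i ∈ s, a i = 1) ∧ ∀ i ∈ t, a i = c / q i := by
  have ha' : ∀ i ∈ t, a i ≤ c / q i := fun i hi ↦ by
    rw [le_div_iff₀ (hq i hi), mul_comm]
    exact hqa i hi
  have hs : ∑ i ∈ s, a i ≤ ∑ _i ∈ s, (1 : ℝ) := sum_le_sum ha
  have ht : ∑ i ∈ t, a i ≤ ∑ i ∈ t, c / q i := sum_le_sum ha'
  have hbound : ∑ _i ∈ s, (1 : ℝ) + ∑ i ∈ t, c / q i = #s + c * ∑ i ∈ t, 1 / q i := by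
    simp only [sum_const, nsmul_one, mul_sum, mul_one_div]
  rw [sum_union hst, ← hbound] at hsum
  exact ⟨(sum_eq_sum_iff_of_le ha).1 (by linarith), (sum_eq_sum_iff_of_le ha').1 (by linarith)⟩

theorem optimizers_characterization_general {m n d : ℕ} (hnm : n < m)
    (hdn : d ≤ n - 1) (q : ℕ → ℝ)
    (hq0 : ∀ i ∈ Finset.Icc 1 m, 0 < q i)
    (a : ℕ → ℝ) (ha : ∀ i ∈ Finset.Icc 1 m, a i ∈ Set.Icc (0 : ℝ) 1)
    (hsum : (∑ i ∈ Finset.Icc 1 m, a i) = (n : ℝ))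
    (hne : (Finset.Icc 1 m).Nonempty)
    (hmax : (Finset.Icc 1 m).sup' hne (fun i => q i * a i)
      = ((n : ℝ) - d) / (∑ k ∈ Finset.Icc (d + 1) m, 1 / q k)) :
    (∀ i ∈ Finset.Icc 1 m, i ≤ d → a i = 1) ∧
    (∀ i ∈ Finset.Icc 1 m, d < i →
      a i = ((n : ℝ) - d) / (q i * ∑ k ∈ Finset.Icc (d + 1) m, 1 / q k)) := by
  have hlow : Icc 1 d ⊆ Icc 1 m := Icc_subset_Icc_right (by omega)
  have hhigh : Icc (d + 1) m ⊆ Icc 1 m := Icc_subset_Icc_left (by omega)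
  have hunion : Icc 1 d ∪ Icc (d + 1) m = Icc 1 m := by
    ext i; simp only [mem_union, mem_Icc]; omega
  have hdisj : Disjoint (Icc 1 d) (Icc (d + 1) m) := disjoint_left.2 fun i hi hi' ↦ by
    simp only [mem_Icc] at hi hi'; omega
  set S := ∑ k ∈ Icc (d + 1) m, 1 / q k
  have hS : 0 < S := sum_pos (fun k hk ↦ one_div_pos.2 (hq0 k (hhigh hk)))
    ⟨d + 1, mem_Icc.2 ⟨le_rfl, by omega⟩⟩
  obtain ⟨hone, hdiv⟩ := eq_one_and_eq_div_of_sum_eq (c := ((n : ℝ) - d) / S) hdisj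
    (fun i hi ↦ hq0 i (hhigh hi)) (fun i hi ↦ (ha i (hlow hi)).2)
    (fun i hi ↦ hmax ▸ le_sup' (fun i ↦ q i * a i) (hhigh hi))
    (by rw [hunion, hsum, Nat.card_Icc, Nat.add_sub_cancel, div_mul_cancel₀ _ hS.ne']; ring)
  refine ⟨fun i hi hid ↦ hone i (mem_Icc.2 ⟨(mem_Icc.1 hi).1, hid⟩), fun i hi hid ↦ ?_⟩
  rw [hdiv i (mem_Icc.2 ⟨hid, (mem_Icc.1 hi).2⟩), div_div, mul_comm]

/-- Characterization of optimizers: if `a ∈ [0,1]^m`, `∑ a_i = n` and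
`max_i p̃_i a_i = (n - d)/∑_{k=d+1}^m 1/p̃_k`, then `a_i = 1` for `i ≤ d` and
`a_i = (n - d)/(p̃_i ∑_{k=d+1}^m 1/p̃_k)` for `i > d`. -/
theorem optimizers_characterization {m n d : ℕ} (hn : 0 < n) (hnm : n < m)
    (hd1 : 1 ≤ d) (hdn : d ≤ n - 1) (q : ℕ → ℝ)
    (hq0 : ∀ i ∈ Finset.Icc 1 m, 0 < q i)
    (hmono : ∀ i ∈ Finset.Icc 1 m, ∀ j ∈ Finset.Icc 1 m, i ≤ j → q i ≤ q j)
    (hlt : q d < ((n : ℝ) - d) / (∑ k ∈ Finset.Icc (d + 1) m, 1 / q k))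
    (hge : ((n : ℝ) - d) / (∑ k ∈ Finset.Icc (d + 1) m, 1 / q k) ≤ q (d + 1))
    (a : ℕ → ℝ) (ha : ∀ i ∈ Finset.Icc 1 m, a i ∈ Set.Icc (0 : ℝ) 1)
    (hsum : (∑ i ∈ Finset.Icc 1 m, a i) = (n : ℝ))
    (hne : (Finset.Icc 1 m).Nonempty)
    (hmax : (Finset.Icc 1 m).sup' hne (fun i => q i * a i)
      = ((n : ℝ) - d) / (∑ k ∈ Finset.Icc (d + 1) m, 1 / q k)) :
    (∀ i ∈ Finset.Icc 1 m, i ≤ d → a i = 1) ∧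
    (∀ i ∈ Finset.Icc 1 m, d < i →
      a i = ((n : ℝ) - d) / (q i * ∑ k ∈ Finset.Icc (d + 1) m, 1 / q k)) :=
  optimizers_characterization_general hnm hdn q hq0 a ha hsum hne hmax
end

section
/- Let f₁,…,f_m span an n-dimensional real Hilbert space, and let a_i = ‖f_i‖. There exists a tight frame (g_i)_{i=1}^m of the space with ‖g_i‖ = a_i for all i if and only if max_i a_i² ≤ (1/n) ∑_{i=1}^m a_i². Equivalently: for positive reals a₁,…,a_m, a tight frame with these norms exists in an n-dimensional Hilbert space iff max_i a_i² ≤ (1/n)∑ a_i². -/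
/-!
Necessity is a trace computation: summing the frame identity over an orthonormal basis gives
`n A = ∑ aᵢ²`, and evaluating it at `x = gᵢ` gives `aᵢ⁴ ≤ A aᵢ²`.

Sufficiency is proved for squared norms `cᵢ ∈ [0, A]` with `∑ cᵢ = n A`, by induction on the
number of vectors. Put `s = c₀ + c₁`. If `s ≤ A`, realise `(s, c₂, …)` and prepend a zero vector;
if `s > A`, realise `(s - A, c₂, …)` in the orthogonal complement of a unit vector `e` and prepend
`√A e`. Either way the first two vectors `u, v` are then replaced by
`(cos θ u + sin θ v, -sin θ u + cos θ v)`, which leaves `⟪x, u⟫² + ⟪x, v⟫²` unchanged, and the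
intermediate value theorem picks `θ` so that their squared norms become `c₀, c₁`.
-/

open Finset Module Set
open scoped RealInnerProductSpace

section

variable {H : Type*} [NormedAddCommGroup H] [InnerProductSpace ℝ H] {A : ℝ} {m : ℕ}

lemma inner_sq_add_inner_sq_rotate (u v x : H) (θ : ℝ) :
    ⟪x, Real.cos θ • u + Real.sin θ • v⟫ ^ 2 + ⟪x, -Real.sin θ • u + Real.cos θ • v⟫ ^ 2 =
      ⟪x, u⟫ ^ 2 + ⟪x, v⟫ ^ 2 := by
  simp only [inner_add_right, real_inner_smul_right]
  linear_combination (⟪x, u⟫ ^ 2 + ⟪x, v⟫ ^ 2) * Real.cos_sq_add_sin_sq θ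

lemma norm_sq_add_norm_sq_rotate (u v : H) (θ : ℝ) :
    ‖Real.cos θ • u + Real.sin θ • v‖ ^ 2 + ‖-Real.sin θ • u + Real.cos θ • v‖ ^ 2 =
      ‖u‖ ^ 2 + ‖v‖ ^ 2 := by
  simp only [← real_inner_self_eq_norm_sq, inner_add_left, inner_add_right,
    real_inner_smul_left, real_inner_smul_right, real_inner_comm u v]
  linear_combination (⟪u, u⟫ + ⟪v, v⟫) * Real.cos_sq_add_sin_sq θ

lemma exists_rotate_norm_sq_eq (u v : H) {t : ℝ} (ht : t ∈ uIcc (‖u‖ ^ 2) (‖v‖ ^ 2)) :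
    ∃ θ : ℝ, ‖Real.cos θ • u + Real.sin θ • v‖ ^ 2 = t := by
  have hcont : Continuous fun θ : ℝ => ‖Real.cos θ • u + Real.sin θ • v‖ ^ 2 := by fun_prop
  obtain ⟨θ, -, hθ⟩ := intermediate_value_uIcc (a := 0) (b := Real.pi / 2) hcont.continuousOn
    (by simpa using ht)
  exact ⟨θ, hθ⟩

lemma norm_sq_eq_inner_sq_add_norm_sq_orthogonalProjection {e : H} (he : ‖e‖ = 1) (x : H) :
    ‖x‖ ^ 2 = ⟪e, x⟫ ^ 2 + ‖(ℝ ∙ e)ᗮ.orthogonalProjectionOnto x‖ ^ 2 := by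
  rw [Submodule.norm_sq_eq_add_norm_sq_projection x (ℝ ∙ e), ← Submodule.norm_coe,
    Submodule.coe_orthogonalProjectionOnto_apply, Submodule.starProjection_unit_singleton ℝ he,
    norm_smul, he, mul_one, Real.norm_eq_abs, sq_abs]

lemma exists_norm_eq_one_finrank_orthogonal [FiniteDimensional ℝ H] (h : 0 < finrank ℝ H) :
    ∃ e : H, ‖e‖ = 1 ∧ finrank ℝ (ℝ ∙ e)ᗮ = finrank ℝ H - 1 := by
  have : Nontrivial H := finrank_pos_iff.1 h
  obtain ⟨v, hv⟩ := exists_ne (0 : H)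
  refine ⟨‖v‖⁻¹ • v, norm_smul_inv_norm hv, ?_⟩
  have : Fact (finrank ℝ H = finrank ℝ H - 1 + 1) := ⟨by omega⟩
  exact Submodule.finrank_orthogonal_span_singleton (by simpa using hv)

def IsTightFrame {ι : Type*} [Fintype ι] (A : ℝ) (g : ι → H) : Prop :=
  ∀ x, ∑ i, ⟪x, g i⟫ ^ 2 = A * ‖x‖ ^ 2

namespace IsTightFrame

theorem finrank_mul_eq_sum_norm_sq [FiniteDimensional ℝ H] {ι : Type*} [Fintype ι] {g : ι → H}
    (hg : IsTightFrame A g) : finrank ℝ H * A = ∑ i, ‖g i‖ ^ 2 := by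
  let b := stdOrthonormalBasis ℝ H
  calc finrank ℝ H * A = ∑ j, A * ‖b j‖ ^ 2 := by simp [b.orthonormal.1]
    _ = ∑ j, ∑ i, ⟪b j, g i⟫ ^ 2 := sum_congr rfl fun j _ => (hg (b j)).symm
    _ = ∑ i, ‖g i‖ ^ 2 := by rw [Finset.sum_comm]; simp only [b.sum_sq_inner_right]

theorem norm_sq_le {ι : Type*} [Fintype ι] {g : ι → H} (hg : IsTightFrame A g) (hA : 0 ≤ A)
    (i : ι) : ‖g i‖ ^ 2 ≤ A := by
  have h : ⟪g i, g i⟫ ^ 2 ≤ A * ‖g i‖ ^ 2 :=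
    hg (g i) ▸ single_le_sum (f := fun j => ⟪g i, g j⟫ ^ 2) (fun j _ => sq_nonneg _) (mem_univ i)
  rw [real_inner_self_eq_norm_sq] at h
  nlinarith [sq_nonneg (‖g i‖ ^ 2)]

theorem cons_zero {g : Fin m → H} (hg : IsTightFrame A g) :
    IsTightFrame A (Fin.cons 0 g : Fin (m + 1) → H) := by
  intro x
  simp [Fin.sum_univ_succ, hg x]

theorem cons_sqrt_smul {e : H} (he : ‖e‖ = 1) (hA : 0 ≤ A) {g : Fin m → (ℝ ∙ e)ᗮ}
    (hg : IsTightFrame A g) :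
    IsTightFrame A (Fin.cons (√A • e) fun i => (g i : H) : Fin (m + 1) → H) := by
  intro x
  have hproj : ∀ i, ⟪x, (g i : H)⟫ = ⟪(ℝ ∙ e)ᗮ.orthogonalProjectionOnto x, g i⟫ := fun i =>
    (Submodule.inner_orthogonalProjectionOnto_eq_of_mem_right (g i) x).symm
  rw [Fin.sum_univ_succ, norm_sq_eq_inner_sq_add_norm_sq_orthogonalProjection he x]
  simp only [Fin.cons_zero, Fin.cons_succ, hproj, hg _, real_inner_smul_right, mul_pow,
    Real.sq_sqrt hA, real_inner_comm e x]
  ring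

theorem cons_cons_rotate {u v : H} {g : Fin m → H}
    (hg : IsTightFrame A (Fin.cons u (Fin.cons v g) : Fin (m + 2) → H)) (θ : ℝ) :
    IsTightFrame A (Fin.cons (Real.cos θ • u + Real.sin θ • v)
      (Fin.cons (-Real.sin θ • u + Real.cos θ • v) g) : Fin (m + 2) → H) := by
  intro x
  rw [← hg x]
  simp only [Fin.sum_univ_succ, Fin.cons_zero, Fin.cons_succ, ← add_assoc,
    inner_sq_add_inner_sq_rotate]

end IsTightFrame

variable (H) in
def HasTightFrameWithNormSq {ι : Type*} [Fintype ι] (A : ℝ) (c : ι → ℝ) : Prop :=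
  ∃ g : ι → H, IsTightFrame A g ∧ ∀ i, ‖g i‖ ^ 2 = c i

namespace HasTightFrameWithNormSq

theorem cons_zero {r : Fin m → ℝ} (h : HasTightFrameWithNormSq H A r) :
    HasTightFrameWithNormSq H A (Fin.cons 0 r : Fin (m + 1) → ℝ) := by
  obtain ⟨g, hg, hgr⟩ := h
  refine ⟨Fin.cons 0 g, hg.cons_zero, Fin.cases (by simp) fun i => ?_⟩
  simpa using hgr i

theorem cons_of_orthogonal {e : H} (he : ‖e‖ = 1) (hA : 0 ≤ A) {r : Fin m → ℝ}
    (h : HasTightFrameWithNormSq (ℝ ∙ e)ᗮ A r) :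
    HasTightFrameWithNormSq H A (Fin.cons A r : Fin (m + 1) → ℝ) := by
  obtain ⟨g, hg, hgr⟩ := h
  refine ⟨_, hg.cons_sqrt_smul he hA, Fin.cases ?_ fun i => ?_⟩
  · simp [norm_smul, he, Real.sq_sqrt hA]
  · simpa using hgr i

theorem cons_cons_of_mem_uIcc {a b t t' : ℝ} {r : Fin m → ℝ}
    (h : HasTightFrameWithNormSq H A (Fin.cons a (Fin.cons b r) : Fin (m + 2) → ℝ))
    (ht : t ∈ uIcc a b) (htt' : t + t' = a + b) :
    HasTightFrameWithNormSq H A (Fin.cons t (Fin.cons t' r) : Fin (m + 2) → ℝ) := by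
  obtain ⟨g, hg, hgr⟩ := h
  rw [← Fin.cons_self_tail g, ← Fin.cons_self_tail (Fin.tail g)] at hg hgr
  set u := g 0
  set v := Fin.tail g 0
  have hu : ‖u‖ ^ 2 = a := by simpa using hgr 0
  have hv : ‖v‖ ^ 2 = b := by simpa using hgr 1
  obtain ⟨θ, hθ⟩ := exists_rotate_norm_sq_eq u v (t := t) (by rwa [hu, hv])
  have hsum := norm_sq_add_norm_sq_rotate u v θ
  refine ⟨_, hg.cons_cons_rotate θ, Fin.cases hθ (Fin.cases ?_ fun i => ?_)⟩
  · simp only [Fin.cons_succ, Fin.cons_zero]; linarith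
  · simpa using hgr i.succ.succ

end HasTightFrameWithNormSq

theorem hasTightFrameWithNormSq_fin_zero [FiniteDimensional ℝ H] (h : finrank ℝ H * A = 0)
    (c : Fin 0 → ℝ) : HasTightFrameWithNormSq H A c := by
  refine ⟨Fin.elim0, fun x => ?_, fun i => i.elim0⟩
  rcases mul_eq_zero.1 h with h | h
  · have : Subsingleton H := finrank_zero_iff.1 (by exact_mod_cast h)
    simp [Subsingleton.elim x 0]
  · simp [h]

theorem hasTightFrameWithNormSq_fin_one [FiniteDimensional ℝ H] (c : Fin 1 → ℝ)
    (hc : c 0 ∈ Icc 0 A) (hsum : c 0 = finrank ℝ H * A) : HasTightFrameWithNormSq H A c := by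
  induction c using Fin.consCases with | cons c₀ r => ?_
  simp only [Fin.cons_zero] at hc hsum
  rcases (finrank ℝ H).eq_zero_or_pos with hn | hn
  · obtain rfl : c₀ = 0 := by simpa [hn] using hsum
    exact (hasTightFrameWithNormSq_fin_zero (by simp [hn]) r).cons_zero
  · have hA : 0 ≤ A := hc.1.trans hc.2
    obtain rfl : c₀ = A := hc.2.antisymm (hsum ▸ le_mul_of_one_le_left hA (by exact_mod_cast hn))
    obtain ⟨e, he, hK⟩ := exists_norm_eq_one_finrank_orthogonal hn
    refine (hasTightFrameWithNormSq_fin_zero ?_ r).cons_of_orthogonal he hA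
    rw [hK, Nat.cast_pred hn]
    linear_combination -hsum

theorem hasTightFrameWithNormSq_of_sum_eq [FiniteDimensional ℝ H] (c : Fin (m + 1) → ℝ)
    (hc : ∀ k, c k ∈ Icc 0 A) (hsum : ∑ k, c k = finrank ℝ H * A) :
    HasTightFrameWithNormSq H A c := by
  induction m generalizing H with
  | zero => exact hasTightFrameWithNormSq_fin_one c (hc 0) (by simpa using hsum)
  | succ m ih =>
    induction c using Fin.consCases with | cons c₀ c' => ?_
    induction c' using Fin.consCases with | cons c₁ r => ?_
    simp only [Fin.forall_fin_succ, Fin.cons_zero, Fin.cons_succ, Set.mem_Icc] at hc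
    simp only [Fin.sum_cons] at hsum
    have hr : 0 ≤ ∑ k, r k := sum_nonneg fun k _ => (hc.2.2 k).1
    rcases le_or_gt (c₀ + c₁) A with hs | hs
    · refine (ih (Fin.cons (c₀ + c₁) r) ?_ ?_).cons_zero.cons_cons_of_mem_uIcc
        (mem_uIcc_of_le hc.1.1 (by linarith)) (zero_add _).symm
      · simp only [Fin.forall_fin_succ, Fin.cons_zero, Fin.cons_succ, Set.mem_Icc]
        exact ⟨⟨by linarith, hs⟩, hc.2.2⟩
      · rw [Fin.sum_cons]; linarith
    · have hn : 0 < finrank ℝ H := by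
        by_contra! h
        simp [Nat.le_zero.1 h] at hsum
        linarith
      obtain ⟨e, he, hK⟩ := exists_norm_eq_one_finrank_orthogonal hn
      refine ((ih (H := (ℝ ∙ e)ᗮ) (Fin.cons (c₀ + c₁ - A) r) ?_ ?_).cons_of_orthogonal he
        (by linarith)).cons_cons_of_mem_uIcc (mem_uIcc.2 (.inr ⟨by linarith, hc.1.2⟩)) (by ring)
      · simp only [Fin.forall_fin_succ, Fin.cons_zero, Fin.cons_succ, Set.mem_Icc]
        exact ⟨⟨by linarith, by linarith⟩, hc.2.2⟩
      · rw [Fin.sum_cons, hK, Nat.cast_pred hn]; linarith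

end

theorem tight_frame_exists_iff_general {H : Type*} [NormedAddCommGroup H]
    [InnerProductSpace ℝ H] [FiniteDimensional ℝ H]
    {n m : ℕ} (hm : 0 < m) (hdim : Module.finrank ℝ H = n)
    (a : Fin m → ℝ) (ha : ∀ i, 0 < a i) :
    (∃ g : Fin m → H, (∃ A : ℝ, 0 < A ∧ ∀ x : H,
        (∑ i, (inner ℝ x (g i) : ℝ) ^ 2) = A * ‖x‖ ^ 2) ∧
      ∀ i, ‖g i‖ = a i) ↔
    (∀ i, a i ^ 2 ≤ (1 / (n : ℝ)) * ∑ k, a k ^ 2) := by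
  constructor
  · rintro ⟨g, ⟨A, hA, hg : IsTightFrame A g⟩, hga⟩ i
    have htrace : n * A = ∑ k, a k ^ 2 := by
      simpa [hdim, hga] using hg.finrank_mul_eq_sum_norm_sq
    have hn : (n : ℝ) ≠ 0 := fun h => by
      have hpos : 0 < ∑ k, a k ^ 2 := sum_pos (fun k _ => pow_pos (ha k) 2) ⟨i, mem_univ i⟩
      rw [← htrace, h, zero_mul] at hpos
      exact hpos.false
    rw [← htrace, one_div, inv_mul_cancel_left₀ hn, ← hga i]
    exact hg.norm_sq_le hA.le i
  · intro hub
    set A := 1 / (n : ℝ) * ∑ k, a k ^ 2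
    have hA : 0 < A := (pow_pos (ha ⟨0, hm⟩) 2).trans_le (hub _)
    have hn : (n : ℝ) ≠ 0 := fun h => by simp [A, h] at hA
    obtain ⟨m', rfl⟩ := Nat.exists_eq_add_one_of_ne_zero hm.ne'
    obtain ⟨g, hg, hga⟩ := hasTightFrameWithNormSq_of_sum_eq (H := H) (fun k => a k ^ 2)
      (fun k => ⟨sq_nonneg _, hub k⟩) (by simp only [hdim, A, one_div, mul_inv_cancel_left₀ hn])
    exact ⟨g, ⟨A, hA, hg⟩, fun i => (sq_eq_sq₀ (norm_nonneg _) (ha i).le).1 (hga i)⟩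

/-- Fundamental inequality: in an `n`-dimensional real Hilbert space, a tight frame
with prescribed norms `a_i > 0` exists iff `max_i a_i² ≤ (1/n) ∑ a_i²`. -/
theorem tight_frame_exists_iff {H : Type*} [NormedAddCommGroup H]
    [InnerProductSpace ℝ H] [FiniteDimensional ℝ H]
    {n m : ℕ} (hn : 0 < n) (hm : 0 < m) (hdim : Module.finrank ℝ H = n)
    (a : Fin m → ℝ) (ha : ∀ i, 0 < a i) :
    (∃ g : Fin m → H, (∃ A : ℝ, 0 < A ∧ ∀ x : H,
        (∑ i, (inner ℝ x (g i) : ℝ) ^ 2) = A * ‖x‖ ^ 2) ∧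
      ∀ i, ‖g i‖ = a i) ↔
    (∀ i, a i ^ 2 ≤ (1 / (n : ℝ)) * ∑ k, a k ^ 2) :=
  tight_frame_exists_iff_general hm hdim a ha
end

section
/- Let 0 < p₁ ≤ ⋯ ≤ p_m < 1, P = ∑ p_i, and p̃_i = p_i ∏_{k≠i}(1−p_k). Then ∑_{i=1}^m p̃_i (1/(m−1))(1 − p_i/P) ≤ (1/m) ∑_{i=1}^m p̃_i; equivalently, E_PM ≤ E_CM where E_PM = (n/((m−1)∑ p̃_i)) ∑ p̃_i (1 − p_i/P) and E_CM = n/m. -/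
/-!
Write `Q = ∏ₖ (1 - pₖ)`, so that `p̃ᵢ = Q · pᵢ / (1 - pᵢ)` is increasing in `pᵢ`, while the weights
`gᵢ = (1 - pᵢ / P) / (m - 1)` are decreasing in `pᵢ` and sum to `1`. Chebyshev's sum inequality for
the antivarying sequences `p̃` and `g` then bounds the `g`-weighted sum of `p̃` by its plain mean.
-/

open Finset

lemma monotoneOn_div_one_sub : MonotoneOn (fun x : ℝ ↦ x / (1 - x)) (Set.Iio 1) := by
  intro a ha b hb hab
  rw [Set.mem_Iio] at ha hb
  rw [div_le_div_iff₀ (by linarith) (by linarith)]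
  nlinarith

lemma mul_prod_erase_one_sub {ι : Type*} [DecidableEq ι] {s : Finset ι} {p : ι → ℝ} {i : ι}
    (hi : i ∈ s) (hpi : p i ≠ 1) :
    p i * ∏ k ∈ s.erase i, (1 - p k) = (∏ k ∈ s, (1 - p k)) * (p i / (1 - p i)) := by
  rw [← mul_prod_erase s (fun k ↦ 1 - p k) hi]
  field_simp [sub_ne_zero.2 hpi.symm]

lemma sum_one_sub_div_sum {ι : Type*} {s : Finset ι} {p : ι → ℝ} (hP : ∑ k ∈ s, p k ≠ 0) :
    ∑ i ∈ s, (1 - p i / ∑ k ∈ s, p k) = #s - 1 := by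
  rw [sum_sub_distrib, ← sum_div, div_self hP]
  simp

lemma antivaryOn_mul_div_one_sub_mul_one_sub_div {ι : Type*} {s : Set ι} {p : ι → ℝ}
    (hp : ∀ i ∈ s, p i < 1) {Q c P : ℝ} (hQ : 0 ≤ Q) (hc : 0 ≤ c) (hP : 0 < P) :
    AntivaryOn (fun i ↦ Q * (p i / (1 - p i))) (fun i ↦ c * (1 - p i / P)) s := by
  have hF : MonotoneOn (fun x : ℝ ↦ Q * (x / (1 - x))) (p '' s) := by
    refine fun a ha b hb hab ↦ mul_le_mul_of_nonneg_left ?_ hQ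
    refine monotoneOn_div_one_sub ?_ ?_ hab
    · obtain ⟨i, hi, rfl⟩ := ha; exact hp i hi
    · obtain ⟨i, hi, rfl⟩ := hb; exact hp i hi
  have hG : AntitoneOn (fun x : ℝ ↦ c * (1 - x / P)) (p '' s) := fun a _ b _ hab ↦ by
    dsimp only
    gcongr
  exact ((monovaryOn_self p s).comp_monotoneOn_right hF).symm.comp_antitoneOn_right hG

lemma AntivaryOn.sum_mul_le_inv_card_mul_sum {ι α : Type*} [Field α] [LinearOrder α]
    [IsStrictOrderedRing α] {s : Finset ι} {f g : ι → α} (hfg : AntivaryOn f g s)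
    (hg : ∑ i ∈ s, g i = 1) :
    ∑ i ∈ s, f i * g i ≤ 1 / #s * ∑ i ∈ s, f i := by
  have hs : (0 : α) < #s := by
    rw [Nat.cast_pos, card_pos]
    exact nonempty_of_sum_ne_zero (hg ▸ one_ne_zero)
  have hcheb := hfg.card_mul_sum_le_sum_mul_sum
  rw [hg, mul_one] at hcheb
  rw [one_div_mul_eq_div, le_div_iff₀ hs]
  linarith

theorem E_PM_le_E_CM_general {m : ℕ} (hm : 2 ≤ m) (p : ℕ → ℝ)
    (hp0 : ∀ i ∈ Finset.Icc 1 m, 0 < p i) (hp1 : ∀ i ∈ Finset.Icc 1 m, p i < 1) :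
    ∑ i ∈ Finset.Icc 1 m,
        (p i * ∏ k ∈ (Finset.Icc 1 m).erase i, (1 - p k)) *
          ((1 / ((m : ℝ) - 1)) * (1 - p i / ∑ k ∈ Finset.Icc 1 m, p k)) ≤
      (1 / (m : ℝ)) * ∑ i ∈ Finset.Icc 1 m,
        p i * ∏ k ∈ (Finset.Icc 1 m).erase i, (1 - p k) := by
  set s := Finset.Icc 1 m
  have hcard : (#s : ℝ) = m := by simp [s]
  have hm1 : (1 : ℝ) < m := by exact_mod_cast hm
  have hP : 0 < ∑ k ∈ s, p k := sum_pos hp0 ⟨1, by simp [s]; omega⟩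
  have hQ : 0 ≤ ∏ k ∈ s, (1 - p k) := prod_nonneg fun k hk ↦ sub_nonneg.2 (hp1 k hk).le
  have hg : ∑ i ∈ s, 1 / ((m : ℝ) - 1) * (1 - p i / ∑ k ∈ s, p k) = 1 := by
    rw [← mul_sum, sum_one_sub_div_sum hP.ne', hcard, one_div_mul_cancel (sub_ne_zero.2 hm1.ne')]
  have hp_tilde : ∀ i ∈ s, p i * ∏ k ∈ s.erase i, (1 - p k) =
      (∏ k ∈ s, (1 - p k)) * (p i / (1 - p i)) :=
    fun i hi ↦ mul_prod_erase_one_sub hi (hp1 i hi).ne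
  have hc : 0 ≤ 1 / ((m : ℝ) - 1) := one_div_nonneg.2 (by linarith)
  have hanti := antivaryOn_mul_div_one_sub_mul_one_sub_div (s := ↑s) (fun i ↦ hp1 i) hQ hc hP
  have hcheb := hanti.sum_mul_le_inv_card_mul_sum hg
  rw [hcard] at hcheb
  rwa [sum_congr rfl fun i hi ↦ by rw [hp_tilde i hi], sum_congr rfl hp_tilde]

/-- `E_PM ≤ E_CM`: with `p̃_i = p_i ∏_{k≠i}(1−p_k)` and `P = ∑ p_i`,
`∑ p̃_i (1/(m−1))(1 − p_i/P) ≤ (1/m) ∑ p̃_i`. -/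
theorem E_PM_le_E_CM {m : ℕ} (hm : 2 ≤ m) (p : ℕ → ℝ)
    (hp0 : ∀ i ∈ Finset.Icc 1 m, 0 < p i) (hp1 : ∀ i ∈ Finset.Icc 1 m, p i < 1)
    (hmono : ∀ i ∈ Finset.Icc 1 m, ∀ j ∈ Finset.Icc 1 m, i ≤ j → p i ≤ p j) :
    ∑ i ∈ Finset.Icc 1 m,
        (p i * ∏ k ∈ (Finset.Icc 1 m).erase i, (1 - p k)) *
          ((1 / ((m : ℝ) - 1)) * (1 - p i / ∑ k ∈ Finset.Icc 1 m, p k)) ≤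
      (1 / (m : ℝ)) * ∑ i ∈ Finset.Icc 1 m,
        p i * ∏ k ∈ (Finset.Icc 1 m).erase i, (1 - p k) :=
  E_PM_le_E_CM_general hm p hp0 hp1
end

section
/- Let 0 < p₁ ≤ ⋯ ≤ p_m < 1, p̃_i = p_i ∏_{k≠i}(1−p_k), and d < m with m − d ≥ 2. Then ∑_{i=d+1}^m p̃_i (1 − p_i/∑_{k=d+1}^m p_k) ≥ (m−d)(m−d−1) / (∑_{i=d+1}^m 1/p̃_i). -/
/-!
Write `p̃ᵢ = C · pᵢ / (1 - pᵢ)` with `C = ∏ₖ (1 - pₖ)` and `P = ∑_{k>d} pₖ`. Both `p̃ᵢ` and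
`p̃ᵢ (1 - pᵢ / P)` are increasing functions of `pᵢ`, the latter because two distinct indices
satisfy `pᵢ + pⱼ ≤ P`. Hence `p̃ᵢ (1 - pᵢ / P)` and `1 / p̃ᵢ` are oppositely ordered, and
Chebyshev's sum inequality bounds `(m - d) ∑ (1 - pᵢ / P) = (m - d)(m - d - 1)` by
`∑ p̃ᵢ (1 - pᵢ / P) · ∑ 1 / p̃ᵢ`.
-/

open Finset

theorem Finset.add_le_sum_of_ne {ι M : Type*} [AddCommMonoid M] [PartialOrder M]
    [IsOrderedAddMonoid M] {s : Finset ι} {f : ι → M} (hf : ∀ i ∈ s, 0 ≤ f i) {i j : ι}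
    (hi : i ∈ s) (hj : j ∈ s) (hij : i ≠ j) : f i + f j ≤ ∑ k ∈ s, f k := by
  classical
  rw [← sum_pair hij]
  exact sum_le_sum_of_subset_of_nonneg (insert_subset hi (singleton_subset_iff.2 hj))
    fun k hk _ => hf k hk

theorem Finset.prod_erase_eq_div₀ {ι K : Type*} [DecidableEq ι] [Field K] {s : Finset ι}
    {f : ι → K} {a : ι} (ha : a ∈ s) (hfa : f a ≠ 0) :
    ∏ k ∈ s.erase a, f k = (∏ k ∈ s, f k) / f a :=
  eq_div_of_mul_eq hfa (by rw [mul_comm, mul_prod_erase s f ha])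

theorem mul_one_sub_div_div_one_sub_le {x y P : ℝ} (hx : 0 < x) (hxy : x ≤ y) (hy : y < 1)
    (hP : x + y ≤ P) : x * (1 - x / P) / (1 - x) ≤ y * (1 - y / P) / (1 - y) := by
  have hP0 : 0 < P := by linarith
  -- `y (P - y) (1 - x) - x (P - x) (1 - y) = (y - x) (P - x - y + x y)`
  have key : x * (P - x) * (1 - y) ≤ y * (P - y) * (1 - x) := by
    nlinarith [mul_nonneg (sub_nonneg.2 hxy) (by nlinarith : 0 ≤ P - x - y + x * y)]
  rw [div_le_div_iff₀ (by linarith) (by linarith), one_sub_div hP0.ne', one_sub_div hP0.ne']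
  field_simp
  linarith

theorem card_mul_sum_le_sum_mul_mul_sum_one_div {ι : Type*} {s : Finset ι} {w c : ι → ℝ}
    (hw : ∀ i ∈ s, 0 < w i) (hwc : MonovaryOn (fun i => w i * c i) w s) :
    #s * ∑ i ∈ s, c i ≤ (∑ i ∈ s, w i * c i) * ∑ i ∈ s, 1 / w i := by
  have hanti : AntivaryOn (fun i => w i * c i) (fun i => 1 / w i) s := fun i hi j hj hlt =>
    hwc hj hi ((one_div_lt_one_div (hw i hi) (hw j hj)).1 hlt)
  calc (#s : ℝ) * ∑ i ∈ s, c i = #s * ∑ i ∈ s, w i * c i * (1 / w i) := by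
        congr 1
        refine sum_congr rfl fun i hi => ?_
        field_simp [(hw i hi).ne']
    _ ≤ _ := hanti.card_mul_sum_le_sum_mul_sum

theorem card_mul_card_sub_one_div_sum_one_div_le {ι : Type*} {s : Finset ι} (hs : s.Nonempty)
    {p w : ι → ℝ} {C : ℝ} (hC : 0 < C) (hp0 : ∀ i ∈ s, 0 < p i) (hp1 : ∀ i ∈ s, p i < 1)
    (hw : ∀ i ∈ s, w i = C * (p i / (1 - p i))) :
    (#s : ℝ) * (#s - 1) / ∑ i ∈ s, 1 / w i ≤ ∑ i ∈ s, w i * (1 - p i / ∑ k ∈ s, p k) := by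
  set P := ∑ k ∈ s, p k
  have hP : 0 < P := sum_pos hp0 hs
  have hw0 : ∀ i ∈ s, 0 < w i := fun i hi => by
    rw [hw i hi]; have := hp1 i hi; have := hp0 i hi; positivity
  have hsum : ∑ i ∈ s, (1 - p i / P) = #s - 1 := by
    rw [sum_sub_distrib, ← sum_div, div_self hP.ne']; simp
  have hmono : MonovaryOn (fun i => w i * (1 - p i / P)) w s := by
    intro i hi j hj hlt
    have hpij : p i < p j := by
      by_contra! hji
      refine hlt.not_ge ?_
      rw [hw i hi, hw j hj]
      gcongr
      · exact (hp0 i hi).le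
      · exact sub_pos.2 (hp1 i hi)
    have hPij : p i + p j ≤ P :=
      add_le_sum_of_ne (fun k hk => (hp0 k hk).le) hi hj (by rintro rfl; exact hpij.false)
    have key := mul_one_sub_div_div_one_sub_le (hp0 i hi) hpij.le (hp1 j hj) hPij
    simp only [hw i hi, hw j hj, mul_assoc, div_mul_eq_mul_div]
    gcongr
  rw [div_le_iff₀ (sum_pos (fun i hi => one_div_pos.2 (hw0 i hi)) hs), ← hsum]
  exact card_mul_sum_le_sum_mul_mul_sum_one_div hw0 hmono

theorem tail_chebyshev_bound_general {m d : ℕ} (hdm : d + 2 ≤ m) (p : ℕ → ℝ)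
    (hp0 : ∀ i ∈ Finset.Icc 1 m, 0 < p i) (hp1 : ∀ i ∈ Finset.Icc 1 m, p i < 1) :
    ((m : ℝ) - d) * ((m : ℝ) - d - 1) /
        (∑ i ∈ Finset.Icc (d + 1) m,
          1 / (p i * ∏ k ∈ (Finset.Icc 1 m).erase i, (1 - p k))) ≤
      ∑ i ∈ Finset.Icc (d + 1) m,
        (p i * ∏ k ∈ (Finset.Icc 1 m).erase i, (1 - p k)) *
          (1 - p i / ∑ k ∈ Finset.Icc (d + 1) m, p k) := by
  have hsub : Icc (d + 1) m ⊆ Icc 1 m := Icc_subset_Icc_left (by omega)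
  have hpos : ∀ k ∈ Icc 1 m, 0 < 1 - p k := fun k hk => sub_pos.2 (hp1 k hk)
  have hcard : (#(Icc (d + 1) m) : ℝ) = m - d := by
    rw [Nat.card_Icc, Nat.add_sub_add_right, Nat.cast_sub (by omega)]
  have hw : ∀ i ∈ Icc (d + 1) m, p i * ∏ k ∈ (Icc 1 m).erase i, (1 - p k) =
      (∏ k ∈ Icc 1 m, (1 - p k)) * (p i / (1 - p i)) := fun i hi => by
    rw [prod_erase_eq_div₀ (hsub hi) (hpos i (hsub hi)).ne']
    ring
  have := card_mul_card_sub_one_div_sum_one_div_le (nonempty_Icc.2 (by omega)) (prod_pos hpos)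
    (fun i hi => hp0 i (hsub hi)) (fun i hi => hp1 i (hsub hi)) hw
  rwa [hcard] at this

/-- Chebyshev application:
`∑_{i=d+1}^m p̃_i (1 − p_i/∑_{k>d} p_k) ≥ (m−d)(m−d−1)/∑_{i>d} 1/p̃_i`. -/
theorem tail_chebyshev_bound {m d : ℕ} (hdm : d + 2 ≤ m) (p : ℕ → ℝ)
    (hp0 : ∀ i ∈ Finset.Icc 1 m, 0 < p i) (hp1 : ∀ i ∈ Finset.Icc 1 m, p i < 1)
    (hmono : ∀ i ∈ Finset.Icc 1 m, ∀ j ∈ Finset.Icc 1 m, i ≤ j → p i ≤ p j) :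
    ((m : ℝ) - d) * ((m : ℝ) - d - 1) /
        (∑ i ∈ Finset.Icc (d + 1) m,
          1 / (p i * ∏ k ∈ (Finset.Icc 1 m).erase i, (1 - p k))) ≤
      ∑ i ∈ Finset.Icc (d + 1) m,
        (p i * ∏ k ∈ (Finset.Icc 1 m).erase i, (1 - p k)) *
          (1 - p i / ∑ k ∈ Finset.Icc (d + 1) m, p k) :=
  tail_chebyshev_bound_general hdm p hp0 hp1
end
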